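/- arXiv:1004.1430 — 2 statements merged into one kernel-verified Lean document; each statement's English description precedes it below -/
import Mathlib

section
/- Let k be a positive integer and (x,y) a vertex of the hexagonal grid with x+y odd. Then there exist paths of length exactly 2k+1 from (x,y) to every vertex in {(x−k+2j, y−k−1) : j=0,…,k} and to every vertex in {(x−k−1+2j, y+k) : j=0,…,k+1}. -/
/-- The hexagonal grid in its brick wall representation: vertex set ℤ×ℤ,
with (x,y) adjacent to (x±1,y) always, and to (x,y+1) if x+y is even
(equivalently, to (x,y-1) if x+y is odd). -/
def hexGraph : SimpleGraph (ℤ × ℤ) where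
  Adj u v := (u.2 = v.2 ∧ (u.1 = v.1 + 1 ∨ v.1 = u.1 + 1)) ∨
    (u.1 = v.1 ∧ ((v.2 = u.2 + 1 ∧ Even (u.1 + u.2)) ∨ (u.2 = v.2 + 1 ∧ Even (v.1 + v.2))))
  symm := by
    constructor
    rintro u v (⟨h1, h2 | h2⟩ | ⟨h1, ⟨h2, h3⟩ | ⟨h2, h3⟩⟩)
    · exact Or.inl ⟨h1.symm, Or.inr h2⟩
    · exact Or.inl ⟨h1.symm, Or.inl h2⟩
    · exact Or.inr ⟨h1.symm, Or.inr ⟨h2, h3⟩⟩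
    · exact Or.inr ⟨h1.symm, Or.inl ⟨h2, h3⟩⟩
  loopless := ⟨by rintro ⟨x, y⟩ (⟨_, h | h⟩ | ⟨_, ⟨h, _⟩ | ⟨h, _⟩⟩) <;> omega⟩

/-- The graph distance from a vertex to the horizontal line L_k = {(x,k) : x ∈ ℤ}. -/
noncomputable def hexLineDist (u : ℤ × ℤ) (k : ℤ) : ℕ :=
  sInf {n : ℕ | ∃ x : ℤ, hexGraph.dist u (x, k) = n}

/-!
From a vertex with `x + y` odd, both "down, then sideways" and "sideways, then up" are walks
of length 2 to `(x ± 1, y ∓ 1)`, again a vertex with odd coordinate sum. Choosing left or right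
in each of `k` such moves reaches every `(x - k + 2j, y ∓ k)` with `j ≤ k`; one last edge
(down, resp. sideways) then gives walks of length `2k + 1` to all the listed vertices.
-/

open SimpleGraph

lemma SimpleGraph.exists_walk_length_cons {V : Type*} {G : SimpleGraph V} {u v w : V}
    (h : G.Adj u v) {n : ℕ} (hvw : ∃ p : G.Walk v w, p.length = n) :
    ∃ p : G.Walk u w, p.length = n + 1 :=
  let ⟨p, hp⟩ := hvw
  ⟨p.cons h, by rw [Walk.length_cons, hp]⟩

lemma SimpleGraph.exists_walk_length_concat {V : Type*} {G : SimpleGraph V} {u v w w' : V}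
    {n : ℕ} (huv : ∃ p : G.Walk u v, p.length = n) (h : G.Adj v w) (hw : w = w') :
    ∃ p : G.Walk u w', p.length = n + 1 :=
  let ⟨p, hp⟩ := huv
  ⟨(p.concat h).copy rfl hw, by rw [Walk.length_copy, Walk.length_concat, hp]⟩

lemma exists_walk_diagonal_moves (G : SimpleGraph (ℤ × ℤ)) (S : Set (ℤ × ℤ)) (d : ℤ) (m : ℕ)
    (hmove : ∀ x y s, (x, y) ∈ S → (s = 1 ∨ s = -1) →
      (x + s, y + d) ∈ S ∧ ∃ p : G.Walk (x, y) (x + s, y + d), p.length = m) (n : ℕ) :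
    ∀ x y, (x, y) ∈ S → ∀ j ≤ n,
      ∃ p : G.Walk (x, y) (x - n + 2 * j, y + n * d), p.length = m * n := by
  induction n with
  | zero =>
    intro x y _ j hj
    obtain rfl : j = 0 := Nat.le_zero.mp hj
    exact ⟨Walk.nil.copy rfl (by simp), by simp⟩
  | succ n ih =>
    intro x y hxy j hj
    obtain ⟨s, hs, j', hj', htarget⟩ : ∃ s : ℤ, (s = 1 ∨ s = -1) ∧ ∃ j' ≤ n,
        (x - ↑(n + 1) + 2 * ↑j, y + ↑(n + 1) * d) = (x + s - n + 2 * j', y + d + n * d) := by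
      rcases j with _ | j'
      · exact ⟨-1, Or.inr rfl, 0, Nat.zero_le n, by ext <;> push_cast <;> ring⟩
      · exact ⟨1, Or.inl rfl, j', by omega, by ext <;> push_cast <;> ring⟩
    obtain ⟨hS, p, hp⟩ := hmove x y s hxy hs
    obtain ⟨q, hq⟩ := ih (x + s) (y + d) hS j' hj'
    exact ⟨(p.append q).copy rfl htarget.symm, by simp [hp, hq, mul_add, add_comm]⟩

lemma hexGraph_adj_horizontal (x y s : ℤ) (hs : s = 1 ∨ s = -1) :
    hexGraph.Adj (x, y) (x + s, y) :=
  Or.inl ⟨rfl, by omega⟩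

lemma hexGraph_adj_down (x y : ℤ) (h : Odd (x + y)) : hexGraph.Adj (x, y) (x, y - 1) :=
  Or.inr ⟨rfl, Or.inr ⟨by ring, by rwa [← add_sub_assoc, Int.even_sub_one, Int.not_even_iff_odd]⟩⟩

lemma hexGraph_adj_up (x y : ℤ) (h : Even (x + y)) : hexGraph.Adj (x, y) (x, y + 1) :=
  Or.inr ⟨rfl, Or.inl ⟨rfl, h⟩⟩

lemma hexGraph_move_down_of_odd (x y s : ℤ) (h : Odd (x + y)) (hs : s = 1 ∨ s = -1) :
    Odd (x + s + (y + -1)) ∧ ∃ p : hexGraph.Walk (x, y) (x + s, y + -1), p.length = 2 :=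
  ⟨by rw [Int.odd_iff] at *; omega,
    exists_walk_length_cons (hexGraph_adj_down x y h)
      (exists_walk_length_cons (hexGraph_adj_horizontal x (y - 1) s hs) ⟨Walk.nil, rfl⟩)⟩

lemma hexGraph_move_up_of_odd (x y s : ℤ) (h : Odd (x + y)) (hs : s = 1 ∨ s = -1) :
    Odd (x + s + (y + 1)) ∧ ∃ p : hexGraph.Walk (x, y) (x + s, y + 1), p.length = 2 :=
  have heven : Even (x + s + y) := by rw [Int.even_iff]; rw [Int.odd_iff] at h; omega
  ⟨by rw [Int.odd_iff]; rw [Int.odd_iff] at h; omega,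
    exists_walk_length_cons (hexGraph_adj_horizontal x y s hs)
      (exists_walk_length_cons (hexGraph_adj_up (x + s) y heven) ⟨Walk.nil, rfl⟩)⟩

theorem hex_odd_paths_odd_vertex_general (k : ℕ) (x y : ℤ) (hxy : Odd (x + y)) :
    (∀ j : ℕ, j ≤ k →
      ∃ p : hexGraph.Walk (x, y) (x - k + 2 * j, y - k - 1), p.length = 2 * k + 1) ∧
    (∀ j : ℕ, j ≤ k + 1 →
      ∃ p : hexGraph.Walk (x, y) (x - k - 1 + 2 * j, y + k), p.length = 2 * k + 1) := by
  have down := exists_walk_diagonal_moves hexGraph {u | Odd (u.1 + u.2)} (-1) 2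
    hexGraph_move_down_of_odd k x y hxy
  have up := exists_walk_diagonal_moves hexGraph {u | Odd (u.1 + u.2)} 1 2
    hexGraph_move_up_of_odd k x y hxy
  refine ⟨fun j hj ↦ ?_, fun j hj ↦ ?_⟩
  · have hodd : Odd (x - k + 2 * j + (y + k * -1)) := by rw [Int.odd_iff] at *; omega
    exact exists_walk_length_concat (down j hj) (hexGraph_adj_down _ _ hodd) (by ext <;> simp; ring)
  · rcases j with _ | j
    · exact exists_walk_length_concat (up 0 k.zero_le)
        (hexGraph_adj_horizontal _ _ (-1) (Or.inr rfl)) (by ext <;> simp; ring)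
    · exact exists_walk_length_concat (up j (by omega))
        (hexGraph_adj_horizontal _ _ 1 (Or.inl rfl)) (by ext <;> simp; ring)

/-- for x+y odd, paths of length exactly 2k+1 from (x,y) to
(x−k+2j, y−k−1) for 0 ≤ j ≤ k, and to (x−k−1+2j, y+k) for 0 ≤ j ≤ k+1. -/
theorem hex_odd_paths_odd_vertex (k : ℕ) (hk : 0 < k) (x y : ℤ) (hxy : Odd (x + y)) :
    (∀ j : ℕ, j ≤ k →
      ∃ p : hexGraph.Walk (x, y) (x - k + 2 * j, y - k - 1), p.length = 2 * k + 1) ∧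
    (∀ j : ℕ, j ≤ k + 1 →
      ∃ p : hexGraph.Walk (x, y) (x - k - 1 + 2 * j, y + k), p.length = 2 * k + 1) :=
  hex_odd_paths_odd_vertex_general k x y hxy
end

section
/- Let r be a positive integer, (x,y) a vertex of the hexagonal grid, and k an integer with d((x,y), L_k) < r. Then every vertex (x−(r−|y−k|)+j, k) for j = 0, 1, …, 2(r−|y−k|) lies in the ball B_r((x,y)) of radius r around (x,y). -/
/-!
A diagonal move (one vertical and one horizontal edge) changes both coordinates by one, so
`(x + t, y + s)` is within `2|s|` of `(x, y)` when `|t| ≤ |s|` and `s + t` is even, and within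
`|s| + |t|` when `|t| ≥ |s|`. Conversely the height `2y + [x + y even]` changes by one along each
edge, so `d((x, y), L_{y+s}) ≥ 2|s| - 1`, and `≥ 2|s|` when the vertical edge at `(x, y)` points
away from the line. This slack pays for the extra step needed when `s + t` is odd, which gives
`d((x, y), (x + t, y + s)) ≤ max (|s| + |t|) (d((x, y), L_{y+s}) + 1)`.
-/

namespace SimpleGraph

variable {V : Type*} {G : SimpleGraph V}

lemma reachable_of_forall_reachable_add_one (g : ℤ → V)
    (h : ∀ n, G.Reachable (g n) (g (n + 1))) (m n : ℤ) : G.Reachable (g m) (g n) := by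
  wlog hmn : m ≤ n generalizing m n
  · exact (this n m (by omega)).symm
  induction n, hmn using Int.leInduction with
  | base => rfl
  | succ n _ ih => exact ih.trans (h n)

lemma Walk.abs_sub_le_length (f : V → ℤ) (hf : ∀ u v, G.Adj u v → |f u - f v| ≤ 1)
    {u v : V} (p : G.Walk u v) : |f u - f v| ≤ p.length := by
  induction p with
  | nil => simp
  | cons hadj _ ih =>
    rw [length_cons, Nat.cast_succ]
    exact (abs_sub_le _ _ _).trans (by linarith [hf _ _ hadj])

lemma Reachable.abs_sub_le_dist (f : V → ℤ) (hf : ∀ u v, G.Adj u v → |f u - f v| ≤ 1)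
    {u v : V} (h : G.Reachable u v) : |f u - f v| ≤ G.dist u v := by
  obtain ⟨p, hp⟩ := h.exists_walk_length_eq_dist
  exact hp ▸ p.abs_sub_le_length f hf

lemma Adj.dist_le_dist_add_one {u v : V} (h : G.Adj u v) (w : V) :
    G.dist u w ≤ G.dist v w + 1 := by
  have := h.reachable.dist_triangle_left w
  rw [dist_eq_one_iff_adj.2 h] at this
  omega

lemma dist_le_two_of_adj_of_adj {u v w : V} (huv : G.Adj u v) (hvw : G.Adj v w) :
    G.dist u w ≤ 2 :=
  dist_le (.cons huv (.cons hvw .nil))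

end SimpleGraph

open SimpleGraph

lemma hexGraph_adj_add_fst (a b : ℤ) {ε : ℤ} (hε : ε = 1 ∨ ε = -1) :
    hexGraph.Adj (a, b) (a + ε, b) :=
  Or.inl ⟨rfl, by omega⟩

lemma hexGraph_adj_add_one_snd {a b : ℤ} (h : Even (a + b)) : hexGraph.Adj (a, b) (a, b + 1) :=
  Or.inr ⟨rfl, Or.inl ⟨rfl, h⟩⟩

lemma hexGraph_adj_sub_one_snd {a b : ℤ} (h : Odd (a + b)) : hexGraph.Adj (a, b) (a, b - 1) :=
  Or.inr ⟨rfl, Or.inr ⟨by ring, by rw [← add_sub_assoc]; exact h.sub_odd odd_one⟩⟩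

lemma hexGraph_reachable_add_one_snd (a b : ℤ) : hexGraph.Reachable (a, b) (a, b + 1) := by
  rcases Int.even_or_odd (a + b) with h | h
  · exact (hexGraph_adj_add_one_snd h).reachable
  · have h' : Even (a + 1 + b) := by rw [add_right_comm]; exact h.add_one
    exact (hexGraph_adj_add_fst a b (Or.inl rfl)).reachable.trans <|
      (hexGraph_adj_add_one_snd h').reachable.trans
        (hexGraph_adj_add_fst a (b + 1) (Or.inl rfl)).symm.reachable

lemma hexGraph_connected : hexGraph.Connected := by
  rw [connected_iff_exists_forall_reachable]
  refine ⟨(0, 0), fun ⟨a, b⟩ => ?_⟩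
  have horizontal := reachable_of_forall_reachable_add_one (G := hexGraph) (·, 0)
    (fun n => (hexGraph_adj_add_fst n 0 (Or.inl rfl)).reachable) 0 a
  exact horizontal.trans <| reachable_of_forall_reachable_add_one (a, ·)
    (hexGraph_reachable_add_one_snd a) 0 b

/-- A vertical edge joins heights `2b + 1` and `2b + 2`, a horizontal edge in row `b` joins
heights `2b` and `2b + 1`. -/
def hexHeight (u : ℤ × ℤ) : ℤ := 2 * u.2 + if Even (u.1 + u.2) then 1 else 0

lemma abs_hexHeight_sub_le_one {u v : ℤ × ℤ} (h : hexGraph.Adj u v) :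
    |hexHeight u - hexHeight v| ≤ 1 := by
  obtain ⟨⟨a, b⟩, ⟨a', b'⟩⟩ := (u, v)
  simp only [hexGraph, Int.even_iff] at h
  simp only [hexHeight, Int.even_iff, abs_le]
  split_ifs <;> omega

lemma abs_hexHeight_sub_le_dist (u v : ℤ × ℤ) :
    |hexHeight u - hexHeight v| ≤ hexGraph.dist u v :=
  (hexGraph_connected u v).abs_sub_le_dist hexHeight fun _ _ => abs_hexHeight_sub_le_one

lemma two_mul_natAbs_le_hexGraph_dist_add_one (a b a' s : ℤ) :
    2 * s.natAbs ≤ hexGraph.dist (a, b) (a', b + s) + 1 := by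
  have := abs_hexHeight_sub_le_dist (a, b) (a', b + s)
  simp only [hexHeight, Int.even_iff, abs_le] at this
  split_ifs at this <;> omega

lemma two_mul_natAbs_le_hexGraph_dist {a b : ℤ} (a' s : ℤ)
    (h : ¬hexGraph.Adj (a, b) (a, b + s.sign)) :
    2 * s.natAbs ≤ hexGraph.dist (a, b) (a', b + s) := by
  have hheight := abs_hexHeight_sub_le_dist (a, b) (a', b + s)
  rcases lt_trichotomy 0 s with hs | rfl | hs
  · rw [Int.sign_eq_one_of_pos hs] at h
    have hpar : ¬Even (a + b) := mt hexGraph_adj_add_one_snd h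
    simp only [hexHeight, Int.even_iff, abs_le] at hheight hpar
    split_ifs at hheight <;> omega
  · simp
  · rw [Int.sign_eq_neg_one_of_neg hs, ← sub_eq_add_neg] at h
    have hpar : ¬Odd (a + b) := mt hexGraph_adj_sub_one_snd h
    simp only [hexHeight, Int.not_odd_iff_even, Int.even_iff, abs_le] at hheight hpar
    split_ifs at hheight <;> omega

lemma hexGraph_dist_le_natAbs (a b t : ℤ) : hexGraph.dist (a, b) (a + t, b) ≤ t.natAbs := by
  induction t using Int.induction_on generalizing a with
  | zero => simp
  | succ i ih =>
    have := (hexGraph_adj_add_fst a b (Or.inl rfl)).dist_le_dist_add_one (a + (i + 1), b)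
    rw [show a + (i + 1) = a + 1 + i by ring] at this ⊢
    have := ih (a + 1)
    omega
  | pred i ih =>
    have := (hexGraph_adj_add_fst a b (Or.inr rfl)).dist_le_dist_add_one (a + (-i - 1), b)
    rw [show a + (-i - 1) = a + -1 + -i by ring] at this ⊢
    have := ih (a + -1)
    omega

lemma hexGraph_dist_diagonal_le_two (a b : ℤ) {ε : ℤ} (hε : ε = 1 ∨ ε = -1) :
    hexGraph.dist (a, b) (a + ε, b + 1) ≤ 2 := by
  rcases Int.even_or_odd (a + b) with h | h
  · exact dist_le_two_of_adj_of_adj (hexGraph_adj_add_one_snd h) (hexGraph_adj_add_fst a _ hε)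
  · have h' : Even (a + ε + b) := by
      rw [Int.even_iff]; rw [Int.odd_iff] at h; omega
    exact dist_le_two_of_adj_of_adj (hexGraph_adj_add_fst a b hε) (hexGraph_adj_add_one_snd h')

lemma hexGraph_dist_le_two_mul_of_natAbs_le (a b t : ℤ) (n : ℕ) (ht : t.natAbs ≤ n)
    (hpar : Even (n + t)) : hexGraph.dist (a, b) (a + t, b + n) ≤ 2 * n := by
  induction n generalizing a b t with
  | zero => simp [show t = 0 by omega]
  | succ n ih =>
    rw [Int.even_iff] at hpar
    push_cast at hpar
    obtain ⟨ε, hε, hεt⟩ : ∃ ε : ℤ, (ε = 1 ∨ ε = -1) ∧ (t - ε).natAbs ≤ n := by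
      rcases lt_or_ge 0 t with h | h
      · exact ⟨1, Or.inl rfl, by omega⟩
      · exact ⟨-1, Or.inr rfl, by omega⟩
    have hrest := ih (a + ε) (b + 1) (t - ε) hεt (by rw [Int.even_iff]; omega)
    rw [show a + ε + (t - ε) = a + t by ring, show b + 1 + n = b + ↑(n + 1) by push_cast; ring]
      at hrest
    have := hexGraph_connected.dist_triangle (u := (a, b)) (v := (a + ε, b + 1))
      (w := (a + t, b + ↑(n + 1)))
    have := hexGraph_dist_diagonal_le_two a b hε
    omega

lemma hexGraph_dist_le_two_mul_natAbs (a b t s : ℤ) (ht : t.natAbs ≤ s.natAbs)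
    (hpar : Even (s + t)) : hexGraph.dist (a, b) (a + t, b + s) ≤ 2 * s.natAbs := by
  obtain ⟨n, rfl | rfl⟩ := Int.eq_nat_or_neg s
  · simpa using hexGraph_dist_le_two_mul_of_natAbs_le a b t n (by simpa using ht) hpar
  · have := hexGraph_dist_le_two_mul_of_natAbs_le (a + t) (b + -n) (-t) n (by simpa using ht)
      (by rw [Int.even_iff] at hpar ⊢; omega)
    rw [SimpleGraph.dist_comm]
    simpa using this

lemma hexGraph_dist_le_natAbs_add_natAbs (a b t s : ℤ) (h : s.natAbs ≤ t.natAbs) :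
    hexGraph.dist (a, b) (a + t, b + s) ≤ s.natAbs + t.natAbs := by
  obtain ⟨t₀, ht₀, hpar, hrest⟩ : ∃ t₀ : ℤ, t₀.natAbs = s.natAbs ∧ Even (s + t₀) ∧
      (t - t₀).natAbs = t.natAbs - s.natAbs := by
    simp only [Int.even_iff]
    rcases le_or_gt 0 t with h' | h'
    · exact ⟨s.natAbs, by omega, by omega, by omega⟩
    · exact ⟨-s.natAbs, by omega, by omega, by omega⟩
  have hdiag := hexGraph_dist_le_two_mul_natAbs a b t₀ s ht₀.le hpar
  have hhoriz := hexGraph_dist_le_natAbs (a + t₀) (b + s) (t - t₀)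
  rw [show a + t₀ + (t - t₀) = a + t by ring] at hhoriz
  have := hexGraph_connected.dist_triangle (u := (a, b)) (v := (a + t₀, b + s))
    (w := (a + t, b + s))
  omega

lemma hexGraph_dist_le_two_mul_natAbs_add_one (a b t s : ℤ) (ht : t.natAbs < s.natAbs)
    (hpar : Odd (s + t)) : hexGraph.dist (a, b) (a + t, b + s) ≤ 2 * s.natAbs + 1 := by
  have hstep := (hexGraph_adj_add_fst a b (Or.inl rfl)).dist_le_dist_add_one (a + t, b + s)
  have hrest := hexGraph_dist_le_two_mul_natAbs (a + 1) b (t - 1) s (by omega)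
    (by rw [Int.even_iff]; rw [Int.odd_iff] at hpar; omega)
  rw [show a + 1 + (t - 1) = a + t by ring] at hrest
  omega

lemma hexGraph_dist_add_one_le_two_mul_natAbs (a b t s : ℤ)
    (hadj : hexGraph.Adj (a, b) (a, b + s.sign)) (ht : t.natAbs < s.natAbs)
    (hpar : Odd (s + t)) : hexGraph.dist (a, b) (a + t, b + s) + 1 ≤ 2 * s.natAbs := by
  have hstep := hadj.dist_le_dist_add_one (a + t, b + s)
  have hsign : (0 < s ∧ s.sign = 1) ∨ (s < 0 ∧ s.sign = -1) := by
    rcases lt_or_gt_of_ne (show s ≠ 0 by omega) with hs | hs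
    · exact Or.inr ⟨hs, Int.sign_eq_neg_one_of_neg hs⟩
    · exact Or.inl ⟨hs, Int.sign_eq_one_of_pos hs⟩
  have hrest := hexGraph_dist_le_two_mul_natAbs a (b + s.sign) t (s - s.sign) (by omega)
    (by rw [Int.even_iff]; rw [Int.odd_iff] at hpar; omega)
  rw [show b + s.sign + (s - s.sign) = b + s by ring] at hrest
  omega

theorem hexGraph_dist_le_max (a b t a' s : ℤ) :
    hexGraph.dist (a, b) (a + t, b + s) ≤
      max (s.natAbs + t.natAbs) (hexGraph.dist (a, b) (a', b + s) + 1) := by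
  rcases le_or_gt s.natAbs t.natAbs with hst | hts
  · exact le_max_of_le_left (hexGraph_dist_le_natAbs_add_natAbs a b t s hst)
  refine le_max_of_le_right ?_
  have hline := two_mul_natAbs_le_hexGraph_dist_add_one a b a' s
  rcases Int.even_or_odd (s + t) with heven | hodd
  · exact (hexGraph_dist_le_two_mul_natAbs a b t s hts.le heven).trans hline
  by_cases hadj : hexGraph.Adj (a, b) (a, b + s.sign)
  · have := hexGraph_dist_add_one_le_two_mul_natAbs a b t s hadj hts hodd
    omega
  · have := two_mul_natAbs_le_hexGraph_dist a' s hadj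
    have := hexGraph_dist_le_two_mul_natAbs_add_one a b t s hts hodd
    omega

theorem hex_vertex_ball_line_general (r : ℕ) (x y k : ℤ)
    (h : hexLineDist (x, y) k < r) :
    ∀ j : ℤ, 0 ≤ j → j ≤ 2 * ((r : ℤ) - |y - k|) →
      (hexGraph.dist (x, y) (x - ((r : ℤ) - |y - k|) + j, k) : ℤ) ≤ r := by
  intro j hj₀ hj
  obtain ⟨x₀, hx₀⟩ : ∃ x₀ : ℤ, hexGraph.dist (x, y) (x₀, k) = hexLineDist (x, y) k :=
    Nat.sInf_mem (s := {n | ∃ x' : ℤ, hexGraph.dist (x, y) (x', k) = n}) ⟨_, x, rfl⟩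
  have hmax := hexGraph_dist_le_max x y (j - (r - |y - k|)) x₀ (k - y)
  rw [add_sub_cancel, hx₀, show x + (j - (r - |y - k|)) = x - (r - |y - k|) + j by ring] at hmax
  have hcentre : (k - y).natAbs + (j - (r - |y - k|)).natAbs ≤ r := by
    rw [Int.abs_eq_natAbs] at hj ⊢
    omega
  exact_mod_cast hmax.trans (max_le hcentre h)

/-- if d((x,y), L_k) < r then the 2(r−|y−k|)+1 consecutive vertices
of L_k centered below/above (x,y) all lie in the ball B_r((x,y)). -/
theorem hex_vertex_ball_line (r : ℕ) (hr : 0 < r) (x y k : ℤ)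
    (h : hexLineDist (x, y) k < r) :
    ∀ j : ℤ, 0 ≤ j → j ≤ 2 * ((r : ℤ) - |y - k|) →
      (hexGraph.dist (x, y) (x - ((r : ℤ) - |y - k|) + j, k) : ℤ) ≤ r :=
  hex_vertex_ball_line_general r x y k h
end
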